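/- arXiv:2305.04591 — 7 statements merged into one kernel-verified Lean document; each statement's English description precedes it below -/
import Mathlib

section
/- Let V be a nontrivial real vector space, W := V × V* with η((X,ξ),(Y,ζ)) := (ξ(Y)+ζ(X))/2. Let α, ω : V ≃ V* be skew linear equivalences, let ρ : V → V be linear with ρ∘ρ = −s•id_V for some s ∈ {−1,1}, and let ε₂, ε₃ ∈ {−1,1}. Define linear endomorphisms of W by 𝕁_ρ(X,ξ) := (ρX, −ξ∘ρ), 𝕁_α(X,ξ) := (α⁻¹ξ, ε₂•αX), and 𝕁_Ω(X,ξ) := (ω⁻¹ξ, ε₃•ωX). Assume 𝕁_ρ, 𝕁_α, 𝕁_Ω pairwise anticommute. Then for all a₁,a₂,a₃ ∈ ℝ, the operator 𝔸 := a₁•𝕁_ρ + a₂•𝕁_α + a₃•𝕁_Ω satisfies 𝔸∘𝔸 = k•id_W and η(𝔸x,𝔸y) = −k•η(x,y) for all x,y ∈ W, where k := −s·a₁² + ε₂·a₂² + ε₃·a₃²; consequently 𝔸 is a generalized almost structure if and only if |k| = 1. -/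
/-!
Each of `𝕁_ρ`, `𝕁_α`, `𝕁_Ω` squares to a scalar (`-s`, `ε₂`, `ε₃`) and is skew-adjoint for `η`
(for `𝕁_α` and `𝕁_Ω` this is the skewness of `α` and `ω`). Since the three pairwise
anticommute, the cross terms of `𝔸 ∘ 𝔸` cancel and `𝔸 ∘ 𝔸 = k • id`. Skew-adjointness passes to
the linear combination `𝔸`, so `η (𝔸 x) (𝔸 y) = -η x (𝔸 (𝔸 y)) = -k * η x y`. Finally
`𝔸 ∘ 𝔸 = γ₁ • id` on a nonzero space forces `γ₁ = k`.
-/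

open LinearMap (BilinForm)

section Anticommuting

variable {R A : Type*} [CommRing R] [Ring A] [Algebra R A]

theorem mul_self_smul_add_smul_add_smul_of_anticommute {J₁ J₂ J₃ : A} {c₁ c₂ c₃ : R}
    (h₁ : J₁ * J₁ = c₁ • 1) (h₂ : J₂ * J₂ = c₂ • 1) (h₃ : J₃ * J₃ = c₃ • 1)
    (h₁₂ : J₁ * J₂ + J₂ * J₁ = 0) (h₁₃ : J₁ * J₃ + J₃ * J₁ = 0) (h₂₃ : J₂ * J₃ + J₃ * J₂ = 0)
    (a₁ a₂ a₃ : R) :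
    (a₁ • J₁ + a₂ • J₂ + a₃ • J₃) * (a₁ • J₁ + a₂ • J₂ + a₃ • J₃) =
      (c₁ * a₁ ^ 2 + c₂ * a₂ ^ 2 + c₃ * a₃ ^ 2) • 1 := by
  rw [add_eq_zero_iff_neg_eq'] at h₁₂ h₁₃ h₂₃
  simp only [add_mul, mul_add, smul_mul_smul, h₁, h₂, h₃, ← h₁₂, ← h₁₃, ← h₂₃]
  module

end Anticommuting

section SkewAdjoint

variable {R M : Type*} [CommRing R] [AddCommGroup M] [Module R M]

theorem BilinForm.apply_apply_of_isSkewAdjoint {B : BilinForm R M} {A : Module.End R M} {k : R}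
    (hA : B.IsSkewAdjoint A) (hsq : A ∘ₗ A = k • LinearMap.id) (x y : M) :
    B (A x) (A y) = -k * B x y := by
  rw [hA x (A y), Pi.neg_apply, ← LinearMap.comp_apply A A, hsq]
  simp

end SkewAdjoint

def IsGeneralizedAlmostStructure {M : Type*} [AddCommGroup M] [Module ℝ M]
    (η : M → M → ℝ) (A : Module.End ℝ M) : Prop :=
  ∃ γ₁ γ₂ : ℝ, (γ₁ = -1 ∨ γ₁ = 1) ∧ (γ₂ = -1 ∨ γ₂ = 1) ∧
    A ∘ₗ A = γ₁ • (LinearMap.id : M →ₗ[ℝ] M) ∧ ∀ x y, η (A x) (A y) = γ₂ * η x y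

theorem isGeneralizedAlmostStructure_iff_abs_eq_one {M : Type*} [AddCommGroup M] [Module ℝ M]
    [Nontrivial M] {η : M → M → ℝ} {A : Module.End ℝ M} {k : ℝ} (hsq : A ∘ₗ A = k • LinearMap.id)
    (hη : ∀ x y, η (A x) (A y) = -k * η x y) :
    IsGeneralizedAlmostStructure η A ↔ |k| = 1 := by
  constructor
  · rintro ⟨γ₁, -, hγ₁, -, hγ₁sq, -⟩
    obtain ⟨v, hv⟩ := exists_ne (0 : M)
    have hkγ : k = γ₁ := smul_left_injective ℝ hv (congrArg (· v) (hsq.symm.trans hγ₁sq))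
    rcases hγ₁ with rfl | rfl <;> simp [hkγ]
  · intro hk
    refine ⟨k, -k, ?_, ?_, hsq, hη⟩ <;>
      rcases (abs_eq zero_le_one).mp hk with rfl | rfl <;> norm_num

section DualPairing

variable {K V : Type*} [Field K] [AddCommGroup V] [Module K V]

variable (K V) in
def dualPairingForm : BilinForm K (V × Module.Dual K V) :=
  LinearMap.mk₂ K (fun x y => (x.2 y.1 + y.2 x.1) / 2)
    (fun _ _ _ => by simp only [Prod.fst_add, Prod.snd_add, map_add, LinearMap.add_apply]; ring)
    (fun _ _ _ => by
      simp only [Prod.smul_fst, Prod.smul_snd, map_smul, LinearMap.smul_apply, smul_eq_mul]; ring)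
    (fun _ _ _ => by simp only [Prod.fst_add, Prod.snd_add, map_add, LinearMap.add_apply]; ring)
    (fun _ _ _ => by
      simp only [Prod.smul_fst, Prod.smul_snd, map_smul, LinearMap.smul_apply, smul_eq_mul]; ring)

@[simp]
theorem dualPairingForm_apply (x y : V × Module.Dual K V) :
    dualPairingForm K V x y = (x.2 y.1 + y.2 x.1) / 2 :=
  rfl

theorem comp_self_of_apply_eq_prod_neg_comp {ρ : V →ₗ[K] V} {c : K}
    (hρ : ρ ∘ₗ ρ = c • LinearMap.id)
    {J : Module.End K (V × Module.Dual K V)} (hJ : ∀ x, J x = (ρ x.1, -(x.2 ∘ₗ ρ))) :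
    J ∘ₗ J = c • LinearMap.id := by
  have hρρ (v : V) : ρ (ρ v) = c • v := congrArg (· v) hρ
  refine LinearMap.ext fun x => Prod.ext ?_ (LinearMap.ext fun v => ?_) <;> simp [hJ, hρρ]

theorem isSkewAdjoint_of_apply_eq_prod_neg_comp {ρ : V →ₗ[K] V}
    {J : Module.End K (V × Module.Dual K V)} (hJ : ∀ x, J x = (ρ x.1, -(x.2 ∘ₗ ρ))) :
    (dualPairingForm K V).IsSkewAdjoint J := by
  intro x y
  simp [hJ]

theorem comp_self_of_apply_eq_symm_smul {α : V ≃ₗ[K] Module.Dual K V} {ε : K}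
    {J : Module.End K (V × Module.Dual K V)} (hJ : ∀ x, J x = (α.symm x.2, ε • α x.1)) :
    J ∘ₗ J = ε • LinearMap.id := by
  refine LinearMap.ext fun x => Prod.ext ?_ (LinearMap.ext fun v => ?_) <;> simp [hJ]

theorem isSkewAdjoint_of_apply_eq_symm_smul {α : V ≃ₗ[K] Module.Dual K V}
    (hα : ∀ X Y : V, α X Y = -α Y X) {ε : K}
    {J : Module.End K (V × Module.Dual K V)} (hJ : ∀ x, J x = (α.symm x.2, ε • α x.1)) :
    (dualPairingForm K V).IsSkewAdjoint J := by
  have hα_symm (ξ ζ : Module.Dual K V) : ζ (α.symm ξ) = -ξ (α.symm ζ) := by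
    simpa using hα (α.symm ζ) (α.symm ξ)
  intro x y
  simp only [hJ, dualPairingForm_apply, LinearMap.smul_apply, smul_eq_mul, Pi.neg_apply,
    Prod.neg_mk, map_neg, LinearMap.neg_apply]
  rw [hα x.1 y.1, hα_symm x.2 y.2]
  ring

end DualPairing

theorem statement_0_general (V : Type*) [AddCommGroup V] [Module ℝ V] [Nontrivial V]
    (α ω : V ≃ₗ[ℝ] Module.Dual ℝ V)
    (hα : ∀ X Y : V, α X Y = - α Y X) (hω : ∀ X Y : V, ω X Y = - ω Y X)
    (ρ : V →ₗ[ℝ] V) (s : ℝ)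
    (hρ : ρ ∘ₗ ρ = (-s) • (LinearMap.id : V →ₗ[ℝ] V))
    (ε₂ ε₃ : ℝ)
    (η : (V × Module.Dual ℝ V) → (V × Module.Dual ℝ V) → ℝ)
    (hη : ∀ x y : V × Module.Dual ℝ V, η x y = (x.2 y.1 + y.2 x.1) / 2)
    (Jρ Jα JΩ : (V × Module.Dual ℝ V) →ₗ[ℝ] (V × Module.Dual ℝ V))
    (hJρ : ∀ x : V × Module.Dual ℝ V, Jρ x = (ρ x.1, -(x.2 ∘ₗ ρ)))
    (hJα : ∀ x : V × Module.Dual ℝ V, Jα x = (α.symm x.2, ε₂ • α x.1))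
    (hJΩ : ∀ x : V × Module.Dual ℝ V, JΩ x = (ω.symm x.2, ε₃ • ω x.1))
    (hac₁ : Jρ ∘ₗ Jα + Jα ∘ₗ Jρ = 0)
    (hac₂ : Jρ ∘ₗ JΩ + JΩ ∘ₗ Jρ = 0)
    (hac₃ : Jα ∘ₗ JΩ + JΩ ∘ₗ Jα = 0)
    (a₁ a₂ a₃ k : ℝ) (hk : k = -s * a₁ ^ 2 + ε₂ * a₂ ^ 2 + ε₃ * a₃ ^ 2)
    (𝔸 : (V × Module.Dual ℝ V) →ₗ[ℝ] (V × Module.Dual ℝ V))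
    (h𝔸 : 𝔸 = a₁ • Jρ + a₂ • Jα + a₃ • JΩ) :
    (𝔸 ∘ₗ 𝔸 = k • (LinearMap.id : (V × Module.Dual ℝ V) →ₗ[ℝ] (V × Module.Dual ℝ V)) ∧
      ∀ x y, η (𝔸 x) (𝔸 y) = -k * η x y) ∧
    ((∃ γ₁ γ₂ : ℝ, (γ₁ = -1 ∨ γ₁ = 1) ∧ (γ₂ = -1 ∨ γ₂ = 1) ∧
        𝔸 ∘ₗ 𝔸 = γ₁ • (LinearMap.id : (V × Module.Dual ℝ V) →ₗ[ℝ] (V × Module.Dual ℝ V)) ∧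
        ∀ x y, η (𝔸 x) (𝔸 y) = γ₂ * η x y) ↔ |k| = 1) := by
  have hsq : 𝔸 ∘ₗ 𝔸 = k • LinearMap.id := by
    rw [h𝔸, hk]
    exact mul_self_smul_add_smul_add_smul_of_anticommute
      (A := Module.End ℝ (V × Module.Dual ℝ V))
      (comp_self_of_apply_eq_prod_neg_comp hρ hJρ) (comp_self_of_apply_eq_symm_smul hJα)
      (comp_self_of_apply_eq_symm_smul hJΩ) hac₁ hac₂ hac₃ a₁ a₂ a₃
  have hskew : (dualPairingForm ℝ V).IsSkewAdjoint 𝔸 := by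
    rw [← LinearMap.mem_skewAdjointSubmodule, h𝔸]
    refine add_mem (add_mem (Submodule.smul_mem _ _ ?_) (Submodule.smul_mem _ _ ?_))
      (Submodule.smul_mem _ _ ?_) <;> rw [LinearMap.mem_skewAdjointSubmodule]
    exacts [isSkewAdjoint_of_apply_eq_prod_neg_comp hJρ,
      isSkewAdjoint_of_apply_eq_symm_smul hα hJα, isSkewAdjoint_of_apply_eq_symm_smul hω hJΩ]
  have hform (x y : V × Module.Dual ℝ V) : η (𝔸 x) (𝔸 y) = -k * η x y := by
    simpa only [hη, dualPairingForm_apply] using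
      BilinForm.apply_apply_of_isSkewAdjoint hskew hsq x y
  exact ⟨⟨hsq, hform⟩, isGeneralizedAlmostStructure_iff_abs_eq_one hsq hform⟩

/-- quadrics of generalized almost structures from a non-degenerate
Monge–Ampère structure (core of Proposition 3.11). -/
theorem statement_0 (V : Type*) [AddCommGroup V] [Module ℝ V] [Nontrivial V]
    (α ω : V ≃ₗ[ℝ] Module.Dual ℝ V)
    (hα : ∀ X Y : V, α X Y = - α Y X) (hω : ∀ X Y : V, ω X Y = - ω Y X)
    (ρ : V →ₗ[ℝ] V) (s : ℝ) (hs : s = -1 ∨ s = 1)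
    (hρ : ρ ∘ₗ ρ = (-s) • (LinearMap.id : V →ₗ[ℝ] V))
    (ε₂ ε₃ : ℝ) (hε₂ : ε₂ = -1 ∨ ε₂ = 1) (hε₃ : ε₃ = -1 ∨ ε₃ = 1)
    (η : (V × Module.Dual ℝ V) → (V × Module.Dual ℝ V) → ℝ)
    (hη : ∀ x y : V × Module.Dual ℝ V, η x y = (x.2 y.1 + y.2 x.1) / 2)
    (Jρ Jα JΩ : (V × Module.Dual ℝ V) →ₗ[ℝ] (V × Module.Dual ℝ V))
    (hJρ : ∀ x : V × Module.Dual ℝ V, Jρ x = (ρ x.1, -(x.2 ∘ₗ ρ)))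
    (hJα : ∀ x : V × Module.Dual ℝ V, Jα x = (α.symm x.2, ε₂ • α x.1))
    (hJΩ : ∀ x : V × Module.Dual ℝ V, JΩ x = (ω.symm x.2, ε₃ • ω x.1))
    (hac₁ : Jρ ∘ₗ Jα + Jα ∘ₗ Jρ = 0)
    (hac₂ : Jρ ∘ₗ JΩ + JΩ ∘ₗ Jρ = 0)
    (hac₃ : Jα ∘ₗ JΩ + JΩ ∘ₗ Jα = 0)
    (a₁ a₂ a₃ k : ℝ) (hk : k = -s * a₁ ^ 2 + ε₂ * a₂ ^ 2 + ε₃ * a₃ ^ 2)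
    (𝔸 : (V × Module.Dual ℝ V) →ₗ[ℝ] (V × Module.Dual ℝ V))
    (h𝔸 : 𝔸 = a₁ • Jρ + a₂ • Jα + a₃ • JΩ) :
    (𝔸 ∘ₗ 𝔸 = k • (LinearMap.id : (V × Module.Dual ℝ V) →ₗ[ℝ] (V × Module.Dual ℝ V)) ∧
      ∀ x y, η (𝔸 x) (𝔸 y) = -k * η x y) ∧
    ((∃ γ₁ γ₂ : ℝ, (γ₁ = -1 ∨ γ₁ = 1) ∧ (γ₂ = -1 ∨ γ₂ = 1) ∧
        𝔸 ∘ₗ 𝔸 = γ₁ • (LinearMap.id : (V × Module.Dual ℝ V) →ₗ[ℝ] (V × Module.Dual ℝ V)) ∧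
        ∀ x y, η (𝔸 x) (𝔸 y) = γ₂ * η x y) ↔ |k| = 1) :=
  statement_0_general V α ω hα hω ρ s hρ ε₂ ε₃ η hη Jρ Jα JΩ hJρ hJα hJΩ hac₁ hac₂ hac₃ a₁ a₂ a₃ k
    hk 𝔸 h𝔸
end

section
/- Let V be a nontrivial real vector space, W := V × V* with η((X,ξ),(Y,ζ)) := (ξ(Y)+ζ(X))/2. Let α, ω : V ≃ V* be skew linear equivalences, let c ∈ ℝ be nonzero, and set ρ := c•(ω⁻¹ ∘ α) : V → V. For ε₁, ε₂, ε₃ ∈ {−1,1}, define endomorphisms of W by 𝕁_ρ(X,ξ) := (ρX, ε₁•(ξ∘ρ)), 𝕁_α(X,ξ) := (α⁻¹ξ, ε₂•αX), and 𝕁_Ω(X,ξ) := (ω⁻¹ξ, ε₃•ωX). Then 𝕁_ρ, 𝕁_α, 𝕁_Ω pairwise anticommute if and only if ε₁ = −1 and ε₃•(α⁻¹∘ω) + ε₂•(ω⁻¹∘α) = 0 as linear endomorphisms of V. -/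
/-- Proposition 3.9 in pointwise linear-algebra form. -/
theorem statement_1 (V : Type*) [AddCommGroup V] [Module ℝ V] [Nontrivial V]
    (α ω : V ≃ₗ[ℝ] Module.Dual ℝ V)
    (hα : ∀ X Y : V, α X Y = - α Y X) (hω : ∀ X Y : V, ω X Y = - ω Y X)
    (c : ℝ) (hc : c ≠ 0)
    (ρ : V →ₗ[ℝ] V) (hρ : ρ = c • (ω.symm.toLinearMap ∘ₗ α.toLinearMap))
    (ε₁ ε₂ ε₃ : ℝ) (hε₁ : ε₁ = -1 ∨ ε₁ = 1) (hε₂ : ε₂ = -1 ∨ ε₂ = 1)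
    (hε₃ : ε₃ = -1 ∨ ε₃ = 1)
    (Jρ Jα JΩ : (V × Module.Dual ℝ V) →ₗ[ℝ] (V × Module.Dual ℝ V))
    (hJρ : ∀ x : V × Module.Dual ℝ V, Jρ x = (ρ x.1, ε₁ • (x.2 ∘ₗ ρ)))
    (hJα : ∀ x : V × Module.Dual ℝ V, Jα x = (α.symm x.2, ε₂ • α x.1))
    (hJΩ : ∀ x : V × Module.Dual ℝ V, JΩ x = (ω.symm x.2, ε₃ • ω x.1)) :
    (Jρ ∘ₗ Jα + Jα ∘ₗ Jρ = 0 ∧ Jρ ∘ₗ JΩ + JΩ ∘ₗ Jρ = 0 ∧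
      Jα ∘ₗ JΩ + JΩ ∘ₗ Jα = 0) ↔
    (ε₁ = -1 ∧
      ε₃ • (α.symm.toLinearMap ∘ₗ ω.toLinearMap) +
        ε₂ • (ω.symm.toLinearMap ∘ₗ α.toLinearMap) = 0) := by
  have hρ' : ∀ Y, ρ Y = c • ω.symm (α Y) := by intro Y; rw [hρ]; rfl
  -- key identity A : α X (ρ Y) = α (ρ X) Y
  have hA : ∀ X Y : V, α X (ρ Y) = α (ρ X) Y := by
    intro X Y
    rw [hρ' Y, hρ' X]
    calc α X (c • ω.symm (α Y))
        = c • (α X (ω.symm (α Y))) := by simp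
      _ = c • (ω (ω.symm (α X)) (ω.symm (α Y))) := by rw [ω.apply_symm_apply]
      _ = c • (-(ω (ω.symm (α Y)) (ω.symm (α X)))) := by rw [hω]
      _ = c • (-(α Y (ω.symm (α X)))) := by rw [ω.apply_symm_apply]
      _ = c • (α (ω.symm (α X)) Y) := by rw [hα (ω.symm (α X)) Y]
      _ = α (c • ω.symm (α X)) Y := by simp
  -- key identity B : ω X (ρ Y) = ω (ρ X) Y
  have hB : ∀ X Y : V, ω X (ρ Y) = ω (ρ X) Y := by
    intro X Y
    rw [hρ' Y, hρ' X]
    calc ω X (c • ω.symm (α Y))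
        = c • (ω X (ω.symm (α Y))) := by simp
      _ = c • (-(ω (ω.symm (α Y)) X)) := by rw [hω]
      _ = c • (-(α Y X)) := by rw [ω.apply_symm_apply]
      _ = c • (α X Y) := by rw [hα X Y]
      _ = c • (ω (ω.symm (α X)) Y) := by rw [ω.apply_symm_apply]
      _ = ω (c • ω.symm (α X)) Y := by simp
  -- dual-level versions
  have hAd : ∀ X : V, (α X : Module.Dual ℝ V) ∘ₗ ρ = α (ρ X) := by
    intro X; ext Y; exact hA X Y
  have hBd : ∀ X : V, (ω X : Module.Dual ℝ V) ∘ₗ ρ = ω (ρ X) := by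
    intro X; ext Y; exact hB X Y
  have hAc : ∀ ξ : Module.Dual ℝ V, ξ ∘ₗ ρ = α (ρ (α.symm ξ)) := by
    intro ξ
    conv_lhs => rw [← α.apply_symm_apply ξ]
    exact hAd (α.symm ξ)
  have hBc : ∀ ξ : Module.Dual ℝ V, ξ ∘ₗ ρ = ω (ρ (ω.symm ξ)) := by
    intro ξ
    conv_lhs => rw [← ω.apply_symm_apply ξ]
    exact hBd (ω.symm ξ)
  have hρne : ∀ X : V, X ≠ 0 → ρ X ≠ 0 := by
    intro X hX h
    rw [hρ', smul_eq_zero] at h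
    rcases h with h | h
    · exact hc h
    · apply hX
      have h2 := congrArg ω h
      rw [ω.apply_symm_apply, map_zero] at h2
      have h3 := congrArg α.symm h2
      simpa using h3
  constructor
  · rintro ⟨h1, _, h3⟩
    obtain ⟨X0, hX0⟩ := exists_ne (0 : V)
    constructor
    · -- ε₁ = -1 from the first anticommutator evaluated at (0, α X0)
      have h := congrArg (fun f : (V × Module.Dual ℝ V) →ₗ[ℝ] _ =>
        (f (0, α X0)).1) h1
      simp only [LinearMap.add_apply, LinearMap.comp_apply, hJρ, hJα,
        map_zero, smul_zero, LinearEquiv.symm_apply_apply, map_smul,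
        LinearMap.zero_comp, LinearMap.zero_apply, Prod.fst_add,
        Prod.fst_zero, hAc] at h
      have h' : (1 + ε₁) • ρ X0 = 0 := by
        rw [add_smul, one_smul]
        simpa using h
      have := (smul_eq_zero.mp h').resolve_right (hρne X0 hX0)
      linarith [this]
    · -- the linear relation from the third anticommutator
      ext X
      have h := congrArg (fun f : (V × Module.Dual ℝ V) →ₗ[ℝ] _ =>
        (f (X, 0)).1) h3
      simp only [LinearMap.add_apply, LinearMap.comp_apply, hJα, hJΩ,
        map_zero, smul_zero, map_smul, Prod.fst_add, Prod.fst_zero,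
        LinearMap.zero_apply] at h
      simpa [LinearMap.add_apply, LinearMap.smul_apply, LinearMap.comp_apply]
        using h
  · rintro ⟨he1, hT⟩
    subst he1
    -- pointwise form of hT
    have hT' : ∀ X : V, ε₃ • α.symm (ω X) + ε₂ • ω.symm (α X) = 0 := by
      intro X
      have := congrArg (fun f : V →ₗ[ℝ] V => f X) hT
      simpa [LinearMap.add_apply, LinearMap.smul_apply, LinearMap.comp_apply]
        using this
    -- the dual counterpart of hT'
    have hT'' : ∀ ξ : Module.Dual ℝ V, ε₂ • α (ω.symm ξ) + ε₃ • ω (α.symm ξ) = 0 := by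
      intro ξ
      have h := congrArg α (hT' (α.symm ξ))
      simp only [map_add, map_smul, α.apply_symm_apply, map_zero] at h
      rw [add_comm] at h
      exact h
    refine ⟨?_, ?_, ?_⟩
    · refine LinearMap.ext fun x => ?_
      simp only [LinearMap.add_apply, LinearMap.comp_apply, hJρ, hJα,
        LinearMap.zero_apply, Prod.mk_add_mk, Prod.mk_eq_zero]
      constructor
      · rw [hAc x.2]
        simp
      · rw [LinearMap.smul_comp, hAd x.1]
        simp [smul_smul]
    · refine LinearMap.ext fun x => ?_
      simp only [LinearMap.add_apply, LinearMap.comp_apply, hJρ, hJΩ,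
        LinearMap.zero_apply, Prod.mk_add_mk, Prod.mk_eq_zero]
      constructor
      · rw [hBc x.2]
        simp
      · rw [LinearMap.smul_comp, hBd x.1]
        simp [smul_smul]
    · refine LinearMap.ext fun x => ?_
      simp only [LinearMap.add_apply, LinearMap.comp_apply, hJα, hJΩ,
        LinearMap.zero_apply, Prod.mk_add_mk, Prod.mk_eq_zero]
      constructor
      · simpa using hT' x.1
      · simpa using hT'' x.2
end

section
/- Let A,B,C,D,E ∈ ℝ with Pf := −B² + AC − DE ≠ 0, and let Ω and α be the 4×4 real matrices Ω := !![0,0,1,0; 0,0,0,1; -1,0,0,0; 0,-1,0,0] and α := !![0,E,B,C; -E,0,-A,-B; -B,A,0,D; -C,B,-D,0] (so α is invertible). Then for ε₂, ε₃ ∈ {−1,1}, the equation ε₃•(α⁻¹ * Ω) + ε₂•(Ω⁻¹ * α) = 0 holds if and only if B² − AC + DE = −ε₂·ε₃ (equivalently, Pf = ε₂·ε₃). -/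
/-!
With `X := Ω⁻¹ α` one has `α⁻¹ Ω = X⁻¹`, and a direct computation gives `X² = -Pf • 1`
(the Monge–Ampère operator of a nondegenerate effective form squares to a scalar).
Hence `X⁻¹ = -Pf⁻¹ • X`, the anticommutativity condition reads `(ε₂ - ε₃ Pf⁻¹) • X = 0`,
and since `X ≠ 0` it is equivalent to `ε₂ Pf = ε₃`, i.e. `Pf = ε₂ ε₃` as `ε₂² = 1`.
-/

namespace Matrix

variable {n K : Type*} [Fintype n] [DecidableEq n] [Field K]

theorem inv_eq_inv_smul_of_mul_self_eq_smul_one {X : Matrix n n K} {c : K} (hc : c ≠ 0)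
    (hX : X * X = c • 1) : X⁻¹ = c⁻¹ • X :=
  inv_eq_right_inv <| by rw [Matrix.mul_smul, hX, smul_smul, inv_mul_cancel₀ hc, one_smul]

theorem inv_eq_neg_of_mul_self_eq_neg_one {J : Matrix n n K} (hJ : J * J = -1) : J⁻¹ = -J := by
  rw [inv_eq_inv_smul_of_mul_self_eq_smul_one (c := -1) (by norm_num) (by rw [hJ, neg_one_smul]),
    inv_neg, inv_one, neg_one_smul]

theorem inv_inv_of_mul_self_eq_neg_one {J : Matrix n n K} (hJ : J * J = -1) : J⁻¹⁻¹ = J := by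
  have hJ' : -J * -J = -1 := by rw [neg_mul_neg, hJ]
  rw [inv_eq_neg_of_mul_self_eq_neg_one hJ, inv_eq_neg_of_mul_self_eq_neg_one hJ', neg_neg]

theorem smul_inv_add_smul_eq_zero_iff [Nonempty n] {X : Matrix n n K} {c : K} (hc : c ≠ 0)
    (hX : X * X = c • 1) (a b : K) : a • X⁻¹ + b • X = 0 ↔ a + b * c = 0 := by
  have hX0 : X ≠ 0 := by
    rintro rfl
    have h := congrFun (congrFun hX (Classical.arbitrary n)) (Classical.arbitrary n)
    exact hc (by simpa using h.symm)
  rw [inv_eq_inv_smul_of_mul_self_eq_smul_one hc hX, smul_smul, ← add_smul, smul_eq_zero,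
    or_iff_left hX0]
  constructor <;> intro h
  · field_simp at h
    linear_combination h
  · field_simp
    linear_combination h

end Matrix

open Matrix

def canonicalSymplecticMatrix : Matrix (Fin 4) (Fin 4) ℝ :=
  !![0,0,1,0; 0,0,0,1; -1,0,0,0; 0,-1,0,0]

def effectiveFormMatrix (A B C D E : ℝ) : Matrix (Fin 4) (Fin 4) ℝ :=
  !![0,E,B,C; -E,0,-A,-B; -B,A,0,D; -C,B,-D,0]

theorem canonicalSymplecticMatrix_mul_self :
    canonicalSymplecticMatrix * canonicalSymplecticMatrix = -1 := by
  ext i j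
  fin_cases i <;> fin_cases j <;> simp [canonicalSymplecticMatrix, mul_apply, Fin.sum_univ_four]

theorem canonicalSymplecticMatrix_mul_effectiveFormMatrix_sq (A B C D E : ℝ) :
    (canonicalSymplecticMatrix * effectiveFormMatrix A B C D E) *
        (canonicalSymplecticMatrix * effectiveFormMatrix A B C D E) =
      (B ^ 2 - A * C + D * E) • 1 := by
  ext i j
  fin_cases i <;> fin_cases j <;>
    simp [canonicalSymplecticMatrix, effectiveFormMatrix, mul_apply, Fin.sum_univ_four] <;> ring

theorem statement_2_general (A B C D E : ℝ) (hPf : -B ^ 2 + A * C - D * E ≠ 0)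
    (ε₂ ε₃ : ℝ) (hε₂ : ε₂ = -1 ∨ ε₂ = 1) :
    let Ω : Matrix (Fin 4) (Fin 4) ℝ := !![0,0,1,0; 0,0,0,1; -1,0,0,0; 0,-1,0,0]
    let α : Matrix (Fin 4) (Fin 4) ℝ := !![0,E,B,C; -E,0,-A,-B; -B,A,0,D; -C,B,-D,0]
    (ε₃ • (α⁻¹ * Ω) + ε₂ • (Ω⁻¹ * α) = 0 ↔ B ^ 2 - A * C + D * E = -ε₂ * ε₃) := by
  show ε₃ • ((effectiveFormMatrix A B C D E)⁻¹ * canonicalSymplecticMatrix) +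
      ε₂ • (canonicalSymplecticMatrix⁻¹ * effectiveFormMatrix A B C D E) = 0 ↔ _
  set Ω := canonicalSymplecticMatrix
  set α := effectiveFormMatrix A B C D E
  have hc : B ^ 2 - A * C + D * E ≠ 0 := fun h => hPf (by linear_combination -h)
  have hΩ : Ω * Ω = -1 := canonicalSymplecticMatrix_mul_self
  have hX : (Ω⁻¹ * α) * (Ω⁻¹ * α) = (B ^ 2 - A * C + D * E) • 1 := by
    rw [inv_eq_neg_of_mul_self_eq_neg_one hΩ, neg_mul, neg_mul_neg,
      canonicalSymplecticMatrix_mul_effectiveFormMatrix_sq]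
  have hαΩ : α⁻¹ * Ω = (Ω⁻¹ * α)⁻¹ := by rw [Matrix.mul_inv_rev, inv_inv_of_mul_self_eq_neg_one hΩ]
  have hε₂_sq : ε₂ * ε₂ = 1 := by rcases hε₂ with rfl | rfl <;> norm_num
  rw [hαΩ, smul_inv_add_smul_eq_zero_iff hc hX]
  constructor <;> intro h
  · linear_combination ε₂ * h - (B ^ 2 - A * C + D * E) * hε₂_sq
  · linear_combination ε₂ * h - ε₃ * hε₂_sq

/-- coordinate form (3.8) of the anticommutativity condition
in Proposition 3.9. -/
theorem statement_2 (A B C D E : ℝ) (hPf : -B ^ 2 + A * C - D * E ≠ 0)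
    (ε₂ ε₃ : ℝ) (hε₂ : ε₂ = -1 ∨ ε₂ = 1) (hε₃ : ε₃ = -1 ∨ ε₃ = 1) :
    let Ω : Matrix (Fin 4) (Fin 4) ℝ := !![0,0,1,0; 0,0,0,1; -1,0,0,0; 0,-1,0,0]
    let α : Matrix (Fin 4) (Fin 4) ℝ := !![0,E,B,C; -E,0,-A,-B; -B,A,0,D; -C,B,-D,0]
    (ε₃ • (α⁻¹ * Ω) + ε₂ • (Ω⁻¹ * α) = 0 ↔ B ^ 2 - A * C + D * E = -ε₂ * ε₃) :=
  statement_2_general A B C D E hPf ε₂ ε₃ hε₂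
end

section
/- Let V be a nontrivial real vector space, α, ω : V ≃ V* skew linear equivalences such that α⁻¹ and ω⁻¹ are linearly independent in Hom(V*, V) (i.e. c•α⁻¹ + d•ω⁻¹ = 0 for reals c,d implies c = d = 0), and let ρ : V → V be a nonzero linear map. For ε₂, ε₃, ε₂', ε₃' ∈ {−1,1} define on W := V × V* the operators 𝕁_ρ(X,ξ) := (ρX, −ξ∘ρ), 𝕁_α^{ε}(X,ξ) := (α⁻¹ξ, ε•αX), 𝕁_Ω^{ε}(X,ξ) := (ω⁻¹ξ, ε•ωX). If a₁•𝕁_ρ + a₂•𝕁_α^{ε₂} + a₃•𝕁_Ω^{ε₃} = b₁•𝕁_ρ + b₂•𝕁_α^{ε₂'} + b₃•𝕁_Ω^{ε₃'} for reals a₁,a₂,a₃,b₁,b₂,b₃, then a₁ = b₁, a₂ = b₂ and a₃ = b₃. -/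
/-- Proposition 3.13, two different coefficient triples give two
different generalized almost structures. -/
theorem statement_3 (V : Type*) [AddCommGroup V] [Module ℝ V] [Nontrivial V]
    (α ω : V ≃ₗ[ℝ] Module.Dual ℝ V)
    (hα : ∀ X Y : V, α X Y = - α Y X) (hω : ∀ X Y : V, ω X Y = - ω Y X)
    (hindep : ∀ c d : ℝ,
      c • α.symm.toLinearMap + d • ω.symm.toLinearMap = 0 → c = 0 ∧ d = 0)
    (ρ : V →ₗ[ℝ] V) (hρ : ρ ≠ 0)
    (ε₂ ε₃ ε₂' ε₃' : ℝ) (hε₂ : ε₂ = -1 ∨ ε₂ = 1) (hε₃ : ε₃ = -1 ∨ ε₃ = 1)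
    (hε₂' : ε₂' = -1 ∨ ε₂' = 1) (hε₃' : ε₃' = -1 ∨ ε₃' = 1)
    (Jρ Jα JΩ Jα' JΩ' : (V × Module.Dual ℝ V) →ₗ[ℝ] (V × Module.Dual ℝ V))
    (hJρ : ∀ x : V × Module.Dual ℝ V, Jρ x = (ρ x.1, -(x.2 ∘ₗ ρ)))
    (hJα : ∀ x : V × Module.Dual ℝ V, Jα x = (α.symm x.2, ε₂ • α x.1))
    (hJΩ : ∀ x : V × Module.Dual ℝ V, JΩ x = (ω.symm x.2, ε₃ • ω x.1))
    (hJα' : ∀ x : V × Module.Dual ℝ V, Jα' x = (α.symm x.2, ε₂' • α x.1))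
    (hJΩ' : ∀ x : V × Module.Dual ℝ V, JΩ' x = (ω.symm x.2, ε₃' • ω x.1))
    (a₁ a₂ a₃ b₁ b₂ b₃ : ℝ)
    (heq : a₁ • Jρ + a₂ • Jα + a₃ • JΩ = b₁ • Jρ + b₂ • Jα' + b₃ • JΩ') :
    a₁ = b₁ ∧ a₂ = b₂ ∧ a₃ = b₃ := by
  have key : ∀ x : V × Module.Dual ℝ V,
      a₁ • Jρ x + a₂ • Jα x + a₃ • JΩ x = b₁ • Jρ x + b₂ • Jα' x + b₃ • JΩ' x := by
    intro x
    have := LinearMap.congr_fun heq x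
    simpa using this
  -- a₁ = b₁: evaluate at (X, 0) with ρ X ≠ 0
  obtain ⟨X, hX⟩ : ∃ X : V, ρ X ≠ 0 := by
    by_contra h
    push_neg at h
    exact hρ (LinearMap.ext fun x => h x)
  have h1 := congrArg Prod.fst (key (X, 0))
  simp [hJρ, hJα, hJΩ, hJα', hJΩ'] at h1
  have ha₁ : a₁ = b₁ := by
    have : (a₁ - b₁) • ρ X = 0 := by rw [sub_smul, h1, sub_self]
    rcases smul_eq_zero.mp this with h | h
    · linarith [sub_eq_zero.mp (by exact_mod_cast h)]
    · exact absurd h hX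
  -- a₂ = b₂, a₃ = b₃: evaluate at (0, ξ)
  have h2 : (a₂ - b₂) • α.symm.toLinearMap + (a₃ - b₃) • ω.symm.toLinearMap = 0 := by
    ext ξ
    have := congrArg Prod.fst (key (0, ξ))
    simp [hJρ, hJα, hJΩ, hJα', hJΩ'] at this
    simp only [LinearMap.add_apply, LinearMap.smul_apply, LinearMap.zero_apply,
      LinearEquiv.coe_coe]
    linear_combination (norm := module) this
  obtain ⟨h23, h33⟩ := hindep _ _ h2
  exact ⟨ha₁, sub_eq_zero.mp h23, sub_eq_zero.mp h33⟩
end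

section
/- Let V be a real vector space, W := V × V* with η((X,ξ),(Y,ζ)) := (ξ(Y)+ζ(X))/2. Let α : V ≃ V* be a skew linear equivalence and ε ∈ {−1,1}. Define 𝕁_α : W → W by 𝕁_α(X,ξ) := (α⁻¹ξ, ε•αX). Then 𝕁_α∘𝕁_α = ε•id_W and η(𝕁_α x, 𝕁_α y) = −ε•η(x,y) for all x,y ∈ W; thus 𝕁_α is a generalized almost structure (of type GaPC when ε = 1 and GaC when ε = −1). -/
/-- Proposition 3.1, non-degenerate 2-form (antidiagonal block) case. -/
theorem statement_9 (V : Type*) [AddCommGroup V] [Module ℝ V]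
    (α : V ≃ₗ[ℝ] Module.Dual ℝ V) (hα : ∀ X Y : V, α X Y = - α Y X)
    (ε : ℝ) (hε : ε = -1 ∨ ε = 1)
    (η : (V × Module.Dual ℝ V) → (V × Module.Dual ℝ V) → ℝ)
    (hη : ∀ x y : V × Module.Dual ℝ V, η x y = (x.2 y.1 + y.2 x.1) / 2)
    (𝕁 : (V × Module.Dual ℝ V) →ₗ[ℝ] (V × Module.Dual ℝ V))
    (h𝕁 : ∀ x : V × Module.Dual ℝ V, 𝕁 x = (α.symm x.2, ε • α x.1)) :
    𝕁 ∘ₗ 𝕁 = ε • (LinearMap.id : (V × Module.Dual ℝ V) →ₗ[ℝ] (V × Module.Dual ℝ V)) ∧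
    (∀ x y, η (𝕁 x) (𝕁 y) = -ε * η x y) ∧
    (∃ γ₁ γ₂ : ℝ, (γ₁ = -1 ∨ γ₁ = 1) ∧ (γ₂ = -1 ∨ γ₂ = 1) ∧
      𝕁 ∘ₗ 𝕁 = γ₁ • (LinearMap.id : (V × Module.Dual ℝ V) →ₗ[ℝ] (V × Module.Dual ℝ V)) ∧
      ∀ x y, η (𝕁 x) (𝕁 y) = γ₂ * η x y) := by
  have hsq : 𝕁 ∘ₗ 𝕁 = ε • (LinearMap.id :
      (V × Module.Dual ℝ V) →ₗ[ℝ] (V × Module.Dual ℝ V)) := by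
    apply LinearMap.ext; intro x
    simp [LinearMap.comp_apply, h𝕁, Prod.ext_iff]
  have hη' : ∀ x y, η (𝕁 x) (𝕁 y) = -ε * η x y := by
    intro x y
    rw [hη, hη, h𝕁, h𝕁]
    simp only [LinearMap.smul_apply]
    rw [hα x.1 (α.symm y.2), hα y.1 (α.symm x.2)]
    simp
    ring
  refine ⟨hsq, hη', ε, -ε, hε, by rcases hε with h | h <;> simp [h], hsq, hη'⟩
end

section
/- Let V be a real vector space, W := V × V* with η((X,ξ),(Y,ζ)) := (ξ(Y)+ζ(X))/2. Let g : V ≃ V* be a symmetric linear equivalence and ε ∈ {−1,1}. Define 𝕁_g : W → W by 𝕁_g(X,ξ) := (g⁻¹ξ, ε•gX). Then 𝕁_g∘𝕁_g = ε•id_W and η(𝕁_g x, 𝕁_g y) = ε•η(x,y) for all x,y ∈ W; thus 𝕁_g is a generalized almost structure (of type GaP when ε = 1 and GaAC when ε = −1). -/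
/-- Proposition 3.1, pseudo-Riemannian metric (antidiagonal block) case. -/
theorem statement_10 (V : Type*) [AddCommGroup V] [Module ℝ V]
    (g : V ≃ₗ[ℝ] Module.Dual ℝ V) (hg : ∀ X Y : V, g X Y = g Y X)
    (ε : ℝ) (hε : ε = -1 ∨ ε = 1)
    (η : (V × Module.Dual ℝ V) → (V × Module.Dual ℝ V) → ℝ)
    (hη : ∀ x y : V × Module.Dual ℝ V, η x y = (x.2 y.1 + y.2 x.1) / 2)
    (𝕁 : (V × Module.Dual ℝ V) →ₗ[ℝ] (V × Module.Dual ℝ V))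
    (h𝕁 : ∀ x : V × Module.Dual ℝ V, 𝕁 x = (g.symm x.2, ε • g x.1)) :
    𝕁 ∘ₗ 𝕁 = ε • (LinearMap.id : (V × Module.Dual ℝ V) →ₗ[ℝ] (V × Module.Dual ℝ V)) ∧
    (∀ x y, η (𝕁 x) (𝕁 y) = ε * η x y) ∧
    (∃ γ₁ γ₂ : ℝ, (γ₁ = -1 ∨ γ₁ = 1) ∧ (γ₂ = -1 ∨ γ₂ = 1) ∧
      𝕁 ∘ₗ 𝕁 = γ₁ • (LinearMap.id : (V × Module.Dual ℝ V) →ₗ[ℝ] (V × Module.Dual ℝ V)) ∧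
      ∀ x y, η (𝕁 x) (𝕁 y) = γ₂ * η x y) := by
  have hsq : 𝕁 ∘ₗ 𝕁 = ε • (LinearMap.id : (V × Module.Dual ℝ V) →ₗ[ℝ] (V × Module.Dual ℝ V)) := by
    apply LinearMap.ext
    intro x
    simp only [LinearMap.comp_apply, h𝕁, LinearMap.smul_apply, LinearMap.id_apply]
    simp [Prod.smul_mk, Prod.ext_iff, map_smul]
  have hiso : ∀ x y, η (𝕁 x) (𝕁 y) = ε * η x y := by
    intro x y
    rw [hη, hη, h𝕁, h𝕁]
    simp only
    have h1 : (ε • g x.1) (g.symm y.2) = ε * y.2 x.1 := by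
      rw [LinearMap.smul_apply]
      rw [hg x.1 (g.symm y.2)]
      simp
    have h2 : (ε • g y.1) (g.symm x.2) = ε * x.2 y.1 := by
      rw [LinearMap.smul_apply]
      rw [hg y.1 (g.symm x.2)]
      simp
    rw [h1, h2]
    ring
  exact ⟨hsq, hiso, ε, ε, hε, hε, hsq, hiso⟩
end

section
/- Let V be a nontrivial real vector space, W := V × V*, α : V ≃ V* a skew linear equivalence, h ∈ ℝ nonzero, and ε₂ ∈ {−1,1}. Define 𝕁_α : W → W by 𝕁_α(X,ξ) := (α⁻¹ξ, ε₂•αX), and define the structure built from the rescaled form h•α by 𝕁_{hα}(X,ξ) := (h⁻¹•α⁻¹ξ, (ε₂·h)•αX). Then 𝕁_{hα} = 𝕁_α if and only if h = 1. -/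
/-- core of Proposition 3.15, rescaling α changes 𝕁_α unless h = 1. -/
theorem statement_12 (V : Type*) [AddCommGroup V] [Module ℝ V] [Nontrivial V]
    (α : V ≃ₗ[ℝ] Module.Dual ℝ V) (hα : ∀ X Y : V, α X Y = - α Y X)
    (h : ℝ) (hh : h ≠ 0) (ε₂ : ℝ) (hε₂ : ε₂ = -1 ∨ ε₂ = 1)
    (Jα Jhα : (V × Module.Dual ℝ V) →ₗ[ℝ] (V × Module.Dual ℝ V))
    (hJα : ∀ x : V × Module.Dual ℝ V, Jα x = (α.symm x.2, ε₂ • α x.1))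
    (hJhα : ∀ x : V × Module.Dual ℝ V,
      Jhα x = (h⁻¹ • α.symm x.2, (ε₂ * h) • α x.1)) :
    Jhα = Jα ↔ h = 1 := by
  constructor
  · intro hJ
    obtain ⟨X, hX⟩ := exists_ne (0 : V)
    have hx := congrArg (fun f => (f (X, 0)).2) hJ
    simp only [hJα, hJhα] at hx
    have hαX : α X ≠ 0 := by
      simpa using α.injective.ne hX
    have h2 : ε₂ * h = ε₂ := smul_left_injective ℝ hαX hx
    have hε : ε₂ ≠ 0 := by rcases hε₂ with rfl | rfl <;> norm_num
    have : ε₂ * h = ε₂ * 1 := by linarith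
    exact mul_left_cancel₀ hε this
  · rintro rfl
    ext x <;> simp [hJα, hJhα]
end
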